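/- arXiv:2004.14181 — 3 statements merged into one kernel-verified Lean document; each statement's English description precedes it below -/
import Mathlib

section
/- Let 𝒮 be a monoidal category and let closed Λ_r-Frobenius data (C, μ, η, Δ, ε) on 𝒮 be given which is unital, counital, and satisfies the Frobenius relations. Then the multiplication is associative: for all x, y, z ∈ ℤ/r one has (μ_{x,y} ⊗ id_{C_z}) ≫ μ_{x+y−1,z} = α_{C_x,C_y,C_z} ≫ (id_{C_x} ⊗ μ_{y,z}) ≫ μ_{x,y+z−1} as morphisms (C_x ⊗ C_y) ⊗ C_z ⟶ C_{x+y+z−2}. (This is the associativity half of Remark 4.2: the Frobenius relation together with unitality and counitality implies associativity.) -/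
open CategoryTheory MonoidalCategory

universe v u

/-- Closed `Λ_r`-Frobenius data on a monoidal category `S`: a family of objects
`C : ℤ/r → S`, multiplications `μ_{x,y} : C x ⊗ C y ⟶ C (x+y-1)`, a unit
`η : 𝟙 ⟶ C 1`, comultiplications `Δ_{x,y} : C (x+y+1) ⟶ C x ⊗ C y` and a
counit `ε : C (-1) ⟶ 𝟙`. -/
structure ClosedLambdaData (r : ℕ) (S : Type u) [Category.{v} S] [MonoidalCategory S] where
  C : ZMod r → S
  mu : ∀ x y : ZMod r, C x ⊗ C y ⟶ C (x + y - 1)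
  eta : 𝟙_ S ⟶ C 1
  delta : ∀ x y : ZMod r, C (x + y + 1) ⟶ C x ⊗ C y
  eps : C (-1) ⟶ 𝟙_ S

namespace ClosedLambdaData

variable {r : ℕ} {S : Type u} [Category.{v} S] [MonoidalCategory S]

/-- The canonical identification `C a ⟶ C b` induced by an equality `a = b` in `ℤ/r`. -/
def cast (D : ClosedLambdaData r S) {a b : ZMod r} (h : a = b) : D.C a ⟶ D.C b :=
  eqToHom (congrArg D.C h)

/-- Unitality of the closed `Λ_r`-Frobenius data. -/
def IsUnital (D : ClosedLambdaData r S) : Prop :=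
  ∀ x : ZMod r,
    ((λ_ (D.C x)).inv ≫ (D.eta ▷ D.C x) ≫ D.mu 1 x ≫
        D.cast (show (1 : ZMod r) + x - 1 = x by ring) = 𝟙 (D.C x)) ∧
    ((ρ_ (D.C x)).inv ≫ (D.C x ◁ D.eta) ≫ D.mu x 1 ≫
        D.cast (show x + (1 : ZMod r) - 1 = x by ring) = 𝟙 (D.C x))

/-- Counitality of the closed `Λ_r`-Frobenius data. -/
def IsCounital (D : ClosedLambdaData r S) : Prop :=
  ∀ x : ZMod r,
    (D.cast (show x = (-1 : ZMod r) + x + 1 by ring) ≫ D.delta (-1) x ≫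
        (D.eps ▷ D.C x) ≫ (λ_ (D.C x)).hom = 𝟙 (D.C x)) ∧
    (D.cast (show x = x + (-1 : ZMod r) + 1 by ring) ≫ D.delta x (-1) ≫
        (D.C x ◁ D.eps) ≫ (ρ_ (D.C x)).hom = 𝟙 (D.C x))

/-- The Frobenius relations for the closed `Λ_r`-Frobenius data. -/
def IsFrobenius (D : ClosedLambdaData r S) : Prop :=
  ∀ x y z : ZMod r,
    ((D.delta x y ▷ D.C z) ≫ (α_ (D.C x) (D.C y) (D.C z)).hom ≫ (D.C x ◁ D.mu y z)
        = D.mu (x + y + 1) z ≫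
          D.cast (show x + y + 1 + z - 1 = x + (y + z - 1) + 1 by ring) ≫
          D.delta x (y + z - 1)) ∧
    ((D.C x ◁ D.delta y z) ≫ (α_ (D.C x) (D.C y) (D.C z)).inv ≫ (D.mu x y ▷ D.C z)
        = D.mu x (y + z + 1) ≫
          D.cast (show x + (y + z + 1) - 1 = x + y - 1 + z + 1 by ring) ≫
          D.delta (x + y - 1) z)

end ClosedLambdaData

/-! By counitality `Δ_{w,-1}`, `w = x+y+z-2`, has a retraction, so it suffices to compare both sides
after composing with it. Two Frobenius relations on each side rewrite both composites as
"split `C_y` by `Δ_{y+z-1,-z}`, then multiply the left half onto `C_x` and the right half onto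
`C_z`", and these two descriptions agree by the coherence and interchange laws. -/

namespace CategoryTheory.MonoidalCategory

variable {S : Type u} [Category.{v} S] [MonoidalCategory S]

lemma whiskerRight_split_merge_eq {X Y Z P Q W E : S} (G : Y ⟶ P ⊗ Q) (M : X ⊗ P ⟶ W)
    (N : Q ⊗ Z ⟶ E) :
    (((X ◁ G) ≫ (α_ X P Q).inv ≫ (M ▷ Q)) ▷ Z) ≫ (α_ W Q Z).hom ≫ (W ◁ N)
      = (α_ X Y Z).hom ≫ (X ◁ ((G ▷ Z) ≫ (α_ P Q Z).hom ≫ (P ◁ N))) ≫ (α_ X P E).inv ≫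
        (M ▷ E) := by
  simp only [whiskerLeft_comp, comp_whiskerRight, Category.assoc]
  rw [associator_naturality_left_assoc M Q Z, associator_inv_naturality_right_assoc X P N,
    whisker_exchange M N]
  monoidal

end CategoryTheory.MonoidalCategory

namespace ClosedLambdaData

variable {r : ℕ} {S : Type u} [Category.{v} S] [MonoidalCategory S] (D : ClosedLambdaData r S)

/- `μ` and `Δ` with the target (resp. source) index fixed only up to an equation in `ℤ/r`:
they absorb the casts, so that the Frobenius relations apply at arbitrary indices. -/
def muTo (x y c : ZMod r) (h : x + y - 1 = c) : D.C x ⊗ D.C y ⟶ D.C c :=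
  D.mu x y ≫ D.cast h

def deltaFrom (c x y : ZMod r) (h : c = x + y + 1) : D.C c ⟶ D.C x ⊗ D.C y :=
  D.cast h ≫ D.delta x y

lemma deltaFrom_whiskerRight_comp_muTo (hF : D.IsFrobenius) {a b c x y z : ZMod r}
    (ha : a = x + y + 1) (hb : y + z - 1 = b) (hc : a + z - 1 = c) (h : c = x + b + 1) :
    (D.deltaFrom a x y ha ▷ D.C z) ≫ (α_ _ _ _).hom ≫ (D.C x ◁ D.muTo y z b hb)
      = D.muTo a z c hc ≫ D.deltaFrom c x b h := by
  subst ha hb hc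
  simpa [muTo, deltaFrom, cast] using (hF x y z).1

lemma whiskerLeft_deltaFrom_comp_muTo (hF : D.IsFrobenius) {a b c x y z : ZMod r}
    (ha : a = y + z + 1) (hb : x + y - 1 = b) (hc : x + a - 1 = c) (h : c = b + z + 1) :
    (D.C x ◁ D.deltaFrom a y z ha) ≫ (α_ _ _ _).inv ≫ (D.muTo x y b hb ▷ D.C z)
      = D.muTo x a c hc ≫ D.deltaFrom c b z h := by
  subst ha hb hc
  simpa [muTo, deltaFrom, cast] using (hF x y z).2

lemma isSplitMono_deltaFrom (hC : D.IsCounital) (x : ZMod r) (h : x = x + -1 + 1) :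
    IsSplitMono (D.deltaFrom x x (-1) h) :=
  IsSplitMono.mk' ⟨(D.C x ◁ D.eps) ≫ (ρ_ (D.C x)).hom, by simpa [deltaFrom] using (hC x).2⟩

lemma muTo_assoc (hC : D.IsCounital) (hF : D.IsFrobenius) {a b c x y z : ZMod r}
    (ha : x + y - 1 = a) (hb : y + z - 1 = b) (hc : a + z - 1 = c) (hc' : x + b - 1 = c) :
    (D.muTo x y a ha ▷ D.C z) ≫ D.muTo a z c hc
      = (α_ _ _ _).hom ≫ (D.C x ◁ D.muTo y z b hb) ≫ D.muTo x b c hc' := by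
  have := D.isSplitMono_deltaFrom hC c (by ring)
  rw [← cancel_mono (D.deltaFrom c c (-1) (by ring))]
  have lhs : ((D.muTo x y a ha ▷ D.C z) ≫ D.muTo a z c hc) ≫ D.deltaFrom c c (-1) (by ring)
      = (((D.C x ◁ D.deltaFrom y b (-z) (by linear_combination hb)) ≫ (α_ _ _ _).inv ≫
          (D.muTo x b c hc' ▷ D.C (-z))) ▷ D.C z) ≫ (α_ _ _ _).hom ≫
          (D.C c ◁ D.muTo (-z) z (-1) (by ring)) := by
    rw [Category.assoc,
      ← D.deltaFrom_whiskerRight_comp_muTo hF (y := -z) (by linear_combination hc) _ hc,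
      ← comp_whiskerRight_assoc, D.whiskerLeft_deltaFrom_comp_muTo hF]
  have rhs : ((α_ _ _ _).hom ≫ (D.C x ◁ D.muTo y z b hb) ≫ D.muTo x b c hc') ≫
        D.deltaFrom c c (-1) (by ring)
      = (α_ _ _ _).hom ≫ (D.C x ◁ ((D.deltaFrom y b (-z) (by linear_combination hb) ▷ D.C z) ≫
          (α_ _ _ _).hom ≫ (D.C b ◁ D.muTo (-z) z (-1) (by ring)))) ≫ (α_ _ _ _).inv ≫
          (D.muTo x b c hc' ▷ D.C (-1)) := by
    rw [Category.assoc, Category.assoc,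
      ← D.whiskerLeft_deltaFrom_comp_muTo hF (y := b) (z := -1) (by ring) hc',
      ← whiskerLeft_comp_assoc, D.deltaFrom_whiskerRight_comp_muTo hF _ _ hb]
  rw [lhs, rhs, whiskerRight_split_merge_eq]

end ClosedLambdaData

/-- The associativity half of Remark 4.2: for unital, counital closed `Λ_r`-Frobenius
data satisfying the Frobenius relations, the multiplication is associative. -/
theorem ClosedLambdaData.associativity {r : ℕ} {S : Type u} [Category.{v} S]
    [MonoidalCategory S] (D : ClosedLambdaData r S)
    (hC : D.IsCounital) (hF : D.IsFrobenius) (x y z : ZMod r) :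
    (D.mu x y ▷ D.C z) ≫ D.mu (x + y - 1) z ≫
        D.cast (show x + y - 1 + z - 1 = x + y + z - 2 by ring)
      = (α_ (D.C x) (D.C y) (D.C z)).hom ≫ (D.C x ◁ D.mu y z) ≫ D.mu x (y + z - 1) ≫
        D.cast (show x + (y + z - 1) - 1 = x + y + z - 2 by ring) := by
  simpa [ClosedLambdaData.muTo, ClosedLambdaData.cast] using
    D.muTo_assoc hC hF rfl rfl (c := x + y + z - 2) (by ring) (by ring)
end

section
/- (Key step in the proof of Proposition 4.3(2), via the Euclidean algorithm.) Let r be a positive integer, let α be any type, and let T : ℤ/r → ℤ/r → α be a function satisfying, for all x, z ∈ ℤ/r, the relations T(x, z) = T(x, x + z) and T(x, z) = T(x + z, z). Then for all x, z ∈ ℤ/r one has T(x, z) = T(g, 0), where g ∈ ℤ/r is the image of the natural number gcd(x̄, gcd(z̄, r)) and x̄, z̄ ∈ {0, 1, …, r−1} denote the canonical representatives of x and z. -/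
/-!
The two relations say that `T` is invariant under the elementary shears of the pair `(x, z)`;
these generate `SL₂(ℤ)`, which contains the quarter turn `(x, z) ↦ (-z, x)`. Running the
Euclidean algorithm on integer representatives of `x` and `z` with these moves reaches
`(gcd, 0)`, and one more run on `(gcd, r) = (gcd, 0)` brings `r` into the gcd.
-/

section Shear

variable {G α : Type*} [AddCommGroup G] {T : G → G → α}

theorem shear_zsmul (h2 : ∀ x z : G, T x z = T (x + z) z) (n : ℤ) (x z : G) :
    T (x + n • z) z = T x z := by
  induction n using Int.induction_on with
  | zero => simp
  | succ k ih => rw [← ih, h2 (x + (k : ℤ) • z), add_zsmul, one_zsmul, add_assoc]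
  | pred k ih =>
    rw [← ih, h2 (x + (-(k : ℤ) - 1) • z), sub_zsmul, one_zsmul, add_assoc,
      neg_add_cancel_right]

theorem quarter_turn (h1 : ∀ x z : G, T x z = T x (x + z)) (h2 : ∀ x z : G, T x z = T (x + z) z)
    (x z : G) : T x z = T (-z) x := by
  have hx : -z + (x + z) = x := by abel
  calc T x z = T x (x + z) := h1 x z
    _ = T (-z) (x + z) := by rw [h2 (-z), hx]
    _ = T (-z) x := by rw [h1 (-z), hx]

theorem neg_zero_invariant (h1 : ∀ x z : G, T x z = T x (x + z))
    (h2 : ∀ x z : G, T x z = T (x + z) z) (x : G) : T (-x) 0 = T x 0 := by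
  rw [← quarter_turn h1 h2 0 x, quarter_turn h1 h2 x 0, neg_zero]

theorem euclid_zsmul (h1 : ∀ x z : G, T x z = T x (x + z))
    (h2 : ∀ x z : G, T x z = T (x + z) z) (v : G) (a b : ℤ) :
    T (a • v) (b • v) = T (Int.gcd a b • v) 0 := by
  induction hn : b.natAbs using Nat.strong_induction_on generalizing a b with
  | _ n ih =>
    subst hn
    rcases eq_or_ne b 0 with rfl | hb
    · rw [zero_zsmul, Int.gcd_zero_right]
      rcases Int.natAbs_eq a with ha | ha <;> rw [ha]
      · rw [natCast_zsmul, Int.natAbs_natCast]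
      · rw [neg_zsmul, neg_zero_invariant h1 h2, natCast_zsmul, Int.natAbs_neg, Int.natAbs_natCast]
    · have hlt : (a % b).natAbs < b.natAbs := by
        have := Int.emod_nonneg a hb
        have := Int.emod_lt a hb
        omega
      calc T (a • v) (b • v) = T ((a % b) • v + (a / b) • b • v) (b • v) := by
            rw [← mul_zsmul, ← add_zsmul, mul_comm, Int.emod_add_mul_ediv]
        _ = T ((-b) • v) ((a % b) • v) := by rw [shear_zsmul h2, quarter_turn h1 h2, neg_zsmul]
        _ = T (Int.gcd (-b) (a % b) • v) 0 := ih _ hlt _ _ rfl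
        _ = T (Int.gcd a b • v) 0 := by rw [Int.neg_gcd, Int.gcd_comm, Int.gcd_emod]

end Shear

theorem euclid_intCast {R α : Type*} [AddCommGroupWithOne R] {T : R → R → α}
    (h1 : ∀ x z : R, T x z = T x (x + z)) (h2 : ∀ x z : R, T x z = T (x + z) z) (a b : ℤ) :
    T a b = T (Int.gcd a b) 0 := by
  simpa only [zsmul_one, nsmul_one] using euclid_zsmul h1 h2 1 a b

/-- For `r = 0` the value is `natAbs`, so the representative has to be taken in `ℤ`. -/
theorem ZMod.exists_intCast_eq_natAbs_eq_val {r : ℕ} (x : ZMod r) :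
    ∃ a : ℤ, (a : ZMod r) = x ∧ a.natAbs = x.val := by
  cases r with
  | zero => exact ⟨x, rfl, rfl⟩
  | succ r => exact ⟨x.val, by simp, Int.natAbs_natCast _⟩

theorem euclid_step_general {r : ℕ} {α : Type*} (T : ZMod r → ZMod r → α)
    (h1 : ∀ x z : ZMod r, T x z = T x (x + z))
    (h2 : ∀ x z : ZMod r, T x z = T (x + z) z)
    (x z : ZMod r) :
    T x z = T ((Nat.gcd x.val (Nat.gcd z.val r) : ℕ) : ZMod r) 0 := by
  obtain ⟨a, rfl, ha⟩ := x.exists_intCast_eq_natAbs_eq_val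
  obtain ⟨b, rfl, hb⟩ := z.exists_intCast_eq_natAbs_eq_val
  calc T a b = T (Int.gcd a b : ℤ) 0 := by rw [euclid_intCast h1 h2, Int.cast_natCast]
    _ = T (Int.gcd a b : ℤ) (r : ℤ) := by rw [Int.cast_natCast r, ZMod.natCast_self]
    _ = T (Nat.gcd (Int.gcd a b) r : ℤ) 0 := by
      rw [euclid_intCast h1 h2, Int.gcd_natCast_natCast, Int.cast_natCast]
    _ = T (Nat.gcd (a : ZMod r).val (Nat.gcd (b : ZMod r).val r) : ℕ) 0 := by
      rw [Int.cast_natCast, Int.gcd_def, ha, hb, Nat.gcd_assoc]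

/-- Key step in the proof of Proposition 4.3(2), via the Euclidean algorithm: if
`T : ℤ/r → ℤ/r → α` satisfies `T (x, z) = T (x, x + z)` and `T (x, z) = T (x + z, z)`
for all `x, z`, then `T (x, z) = T (gcd (x̄, gcd (z̄, r)), 0)`, where `x̄, z̄` are the
canonical representatives of `x` and `z`. -/
theorem euclid_step {r : ℕ} (hr : 0 < r) {α : Type*} (T : ZMod r → ZMod r → α)
    (h1 : ∀ x z : ZMod r, T x z = T x (x + z))
    (h2 : ∀ x z : ZMod r, T x z = T (x + z) z)
    (x z : ZMod r) :
    T x z = T ((Nat.gcd x.val (Nat.gcd z.val r) : ℕ) : ZMod r) 0 :=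
  euclid_step_general T h1 h2 x z
end

section
/- (The diagonal consequence used to prove Proposition 4.3(2).) Let r be a positive integer, let α be any type, and let T : ℤ/r → ℤ/r → α be a function satisfying, for all x, z ∈ ℤ/r, the relations T(x, z) = T(x, x + z) and T(x, z) = T(x + z, z). If x, y ∈ ℤ/r satisfy gcd(x̄, r) = gcd(ȳ, r) (where x̄, ȳ ∈ {0, 1, …, r−1} are the canonical representatives), then T(x, x) = T(y, y). -/
/-!
Both relations say that `T` is unchanged by one step of the subtractive Euclidean algorithm on
either argument, hence by adding any integer multiple of one argument to the other. Along the
diagonal this lets one replace `u` by any `v` generating the same principal ideal: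
`(u, u) ↦ (v, u) ↦ (v, v)`. In `ℤ/r` the element `x` generates the same ideal as
`gcd (x̄, r)`, so `T (x, x)` depends only on that gcd.
-/

section AddCommGroup

variable {G α : Type*} [AddCommGroup G] {T : G → G → α}

theorem apply_add_zsmul_right (h : ∀ x z, T x z = T x (x + z)) (n : ℤ) (x z : G) :
    T x (z + n • x) = T x z := by
  have hper : Function.Periodic (fun m : ℤ => T x (z + m • x)) 1 := fun m => by
    simp only [add_zsmul, one_zsmul]
    rw [h x (z + m • x), add_comm x, add_assoc]
  simpa using hper.int_mul_eq n

theorem apply_add_zsmul_left (h : ∀ x z, T x z = T (x + z) z) (n : ℤ) (x z : G) :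
    T (x + n • z) z = T x z :=
  apply_add_zsmul_right (T := fun a b => T b a) (fun a b => by rw [h b a, add_comm]) n z x

theorem apply_self_eq_of_zsmul_eq (h1 : ∀ x z, T x z = T x (x + z))
    (h2 : ∀ x z, T x z = T (x + z) z) {u v : G} {a b : ℤ} (hv : a • u = v) (hu : b • v = u) :
    T u u = T v v :=
  calc T u u = T (u + (a - 1) • u) u := (apply_add_zsmul_left h2 _ u u).symm
    _ = T v u := by congr 1; rw [← hv, sub_zsmul, one_zsmul]; abel
    _ = T v (u + (1 - b) • v) := (apply_add_zsmul_right h1 _ v u).symm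
    _ = T v v := by congr 1; rw [sub_zsmul, one_zsmul, hu]; abel

end AddCommGroup

namespace ZMod

theorem exists_zsmul_eq_of_dvd {r : ℕ} {u v : ZMod r} (huv : u ∣ v) : ∃ a : ℤ, a • u = v := by
  obtain ⟨c, rfl⟩ := huv
  obtain ⟨a, rfl⟩ := intCast_surjective c
  exact ⟨a, by rw [zsmul_eq_mul, mul_comm]⟩

theorem apply_self_eq_of_dvd_of_dvd {r : ℕ} {α : Type*} {T : ZMod r → ZMod r → α}
    (h1 : ∀ x z, T x z = T x (x + z)) (h2 : ∀ x z, T x z = T (x + z) z) {u v : ZMod r}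
    (huv : u ∣ v) (hvu : v ∣ u) : T u u = T v v := by
  obtain ⟨a, hv⟩ := exists_zsmul_eq_of_dvd huv
  obtain ⟨b, hu⟩ := exists_zsmul_eq_of_dvd hvu
  exact apply_self_eq_of_zsmul_eq h1 h2 hv hu

theorem dvd_natCast_gcd_val {r : ℕ} (x : ZMod r) : x ∣ (x.val.gcd r : ZMod r) :=
  ⟨x⁻¹, (mul_inv_eq_gcd x).symm⟩

theorem natCast_gcd_val_dvd {r : ℕ} (x : ZMod r) : (x.val.gcd r : ZMod r) ∣ x := by
  rcases r with - | r
  · -- `ZMod 0 = ℤ`, where `val` is `natAbs`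
    show ((x.natAbs.gcd 0 : ℕ) : ℤ) ∣ x
    rw [Nat.gcd_zero_right]
    exact Int.natAbs_dvd_self
  · conv_rhs => rw [← natCast_zmod_val x]
    exact Nat.cast_dvd_cast (Nat.gcd_dvd_left _ _)

end ZMod

theorem euclid_diagonal_general {r : ℕ} {α : Type*} (T : ZMod r → ZMod r → α)
    (h1 : ∀ x z : ZMod r, T x z = T x (x + z))
    (h2 : ∀ x z : ZMod r, T x z = T (x + z) z)
    (x y : ZMod r) (h : Nat.gcd x.val r = Nat.gcd y.val r) :
    T x x = T y y := by
  have diag_eq_gcd (u : ZMod r) : T u u = T (u.val.gcd r) (u.val.gcd r) :=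
    ZMod.apply_self_eq_of_dvd_of_dvd h1 h2 (ZMod.dvd_natCast_gcd_val u) (ZMod.natCast_gcd_val_dvd u)
  rw [diag_eq_gcd x, diag_eq_gcd y, h]

/-- The diagonal consequence used to prove Proposition 4.3(2): if
`T : ℤ/r → ℤ/r → α` satisfies `T (x, z) = T (x, x + z)` and `T (x, z) = T (x + z, z)`
for all `x, z`, and `gcd (x̄, r) = gcd (ȳ, r)` for the canonical representatives
`x̄, ȳ` of `x, y`, then `T (x, x) = T (y, y)`. -/
theorem euclid_diagonal {r : ℕ} (hr : 0 < r) {α : Type*} (T : ZMod r → ZMod r → α)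
    (h1 : ∀ x z : ZMod r, T x z = T x (x + z))
    (h2 : ∀ x z : ZMod r, T x z = T (x + z) z)
    (x y : ZMod r) (h : Nat.gcd x.val r = Nat.gcd y.val r) :
    T x x = T y y :=
  euclid_diagonal_general T h1 h2 x y h
end
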